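/- Let p > 3 be a prime with p ≡ ±2 (mod 5) and p ≡ 2 (mod 3), and let a, b ∈ F_{p²} with a² + a − 1 = 0 and b² + b + 1 = 0. Set d = −2(a − b). Then d^(p−1) = −1 and consequently d^((p²−1)/3) = 1, i.e., d is a nonzero cube in F_{p²}. -/

import Mathlib

/-!
Since `b³ = 1` and `p ≡ 2 (mod 3)`, Frobenius sends `b` to `b² = -1 - b`. The element `2a + 1`
is a square root of `5`, which is a non-residue mod `p` by quadratic reciprocity, so
`(2a + 1)^p = 5^((p-1)/2) (2a + 1) = -(2a + 1)`, i.e. Frobenius also sends `a` to the other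
root `-1 - a`. Hence Frobenius negates `a - b`, so `d^p = -d`, and `d ≠ 0` because
`(a - b)(a + b + 1) = 2`. Finally `(p² - 1)/3 = (p - 1)(p + 1)/3` with `(p + 1)/3` even.
-/

theorem legendreSym_five_eq_neg_one (p : ℕ) [Fact p.Prime] (hp2 : p ≠ 2)
    (hp5 : p % 5 = 2 ∨ p % 5 = 3) : legendreSym p 5 = -1 := by
  have : Fact (Nat.Prime 5) := ⟨Nat.prime_five⟩
  rw [show (5 : ℤ) = ((5 : ℕ) : ℤ) from rfl,
    legendreSym.quadratic_reciprocity_one_mod_four (by norm_num) hp2,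
    legendreSym.mod, ← Int.natCast_mod]
  rcases hp5 with h | h <;> rw [h] <;> rfl

theorem pow_eq_neg_one_sub_of_sq_add_add_one_eq_zero {R : Type*} [CommRing R] {b : R} {p : ℕ}
    (hb : b ^ 2 + b + 1 = 0) (hp3 : p % 3 = 2) : b ^ p = -1 - b := by
  have hb3 : b ^ 3 = 1 := by linear_combination (b - 1) * hb
  rw [← Nat.div_add_mod p 3, hp3, pow_add, pow_mul, hb3, one_pow, one_mul]
  linear_combination hb

theorem pow_sub_one_eq_neg_one {R : Type*} [Ring R] [NoZeroDivisors R] {x : R} {n : ℕ}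
    (hn : n ≠ 0) (hx : x ≠ 0) (h : x ^ n = -x) : x ^ (n - 1) = -1 := by
  refine mul_right_cancel₀ hx ?_
  rw [← pow_succ, Nat.sub_add_cancel (Nat.one_le_iff_ne_zero.mpr hn), h, neg_one_mul]

theorem pow_sq_sub_one_div_three_eq_one {M : Type*} [Monoid M] [HasDistribNeg M] {x : M}
    {p : ℕ} (hp : p % 6 = 5) (hx : x ^ (p - 1) = -1) : x ^ ((p ^ 2 - 1) / 3) = 1 := by
  have hexp : (p ^ 2 - 1) / 3 = (p - 1) * ((p + 1) / 3) := by
    rw [← Nat.mul_div_assoc _ (by omega), mul_comm, ← Nat.sq_sub_sq, one_pow]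
  rw [hexp, pow_mul, hx]
  exact Even.neg_one_pow (Nat.even_iff.mpr (by omega))

section CharP

variable {K : Type*} [Field K] (p : ℕ) [Fact p.Prime] [CharP K p]

theorem five_pow_div_two_eq_neg_one (hp2 : p ≠ 2) (hp5 : p % 5 = 2 ∨ p % 5 = 3) :
    (5 : K) ^ (p / 2) = -1 := by
  have h := legendreSym.eq_pow p 5
  rw [legendreSym_five_eq_neg_one p hp2 hp5] at h
  have h' : (5 : ZMod p) ^ (p / 2) = -1 := by exact_mod_cast h.symm
  have := congrArg (ZMod.castHom (dvd_refl p) K) h'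
  rwa [map_pow, map_neg, map_one, map_ofNat] at this

theorem pow_eq_neg_one_sub_of_sq_add_sub_one_eq_zero (hp2 : p ≠ 2)
    (hp5 : p % 5 = 2 ∨ p % 5 = 3) {a : K} (ha : a ^ 2 + a - 1 = 0) : a ^ p = -1 - a := by
  have h2 : (2 : K) ≠ 0 := Ring.two_ne_zero (by rwa [ringChar.eq K p])
  have hsq : (2 * a + 1) ^ 2 = 5 := by linear_combination 4 * ha
  have hneg : (2 * a + 1) ^ p = -(2 * a + 1) := by
    rw [← Nat.div_add_mod p 2, (Nat.Prime.mod_two_eq_one_iff_ne_two Fact.out).mpr hp2,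
      pow_succ, pow_mul, hsq, five_pow_div_two_eq_neg_one p hp2 hp5, neg_one_mul]
  have hfrob : (2 * a + 1) ^ p = 2 * a ^ p + 1 := by
    rw [← frobenius_def, map_add, map_mul, map_ofNat, map_one, frobenius_def]
  have h2mul : 2 * (a ^ p - (-1 - a)) = 0 := by linear_combination hfrob.symm.trans hneg
  exact sub_eq_zero.mp ((mul_eq_zero.mp h2mul).resolve_left h2)

end CharP

theorem stmt_9 (p : ℕ) [Fact p.Prime] (hp : 3 < p)
    (hp5 : p % 5 = 2 ∨ p % 5 = 3) (hp3 : p % 3 = 2)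
    (a b : GaloisField p 2) (ha : a ^ 2 + a - 1 = 0) (hb : b ^ 2 + b + 1 = 0) :
    (-2 * (a - b)) ^ (p - 1) = -1 ∧ (-2 * (a - b)) ^ ((p ^ 2 - 1) / 3) = 1 := by
  have hp2 : p ≠ 2 := by omega
  have hap := pow_eq_neg_one_sub_of_sq_add_sub_one_eq_zero p hp2 hp5 ha
  have hbp := pow_eq_neg_one_sub_of_sq_add_add_one_eq_zero hb hp3
  have hdp : (-2 * (a - b)) ^ p = -(-2 * (a - b)) := by
    rw [← frobenius_def, map_mul, map_neg, map_ofNat, map_sub, frobenius_def, frobenius_def,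
      hap, hbp]
    ring
  have h2 : (2 : GaloisField p 2) ≠ 0 := Ring.two_ne_zero (by rwa [ringChar.eq _ p])
  have hab : (a - b) * (a + b + 1) = 2 := by linear_combination ha - hb
  have hd0 : -2 * (a - b) ≠ 0 :=
    mul_ne_zero (neg_ne_zero.mpr h2) (left_ne_zero_of_mul (hab ▸ h2))
  have hd := pow_sub_one_eq_neg_one (Fact.out : p.Prime).ne_zero hd0 hdp
  have hp6 : p % 6 = 5 := by
    have := (Nat.Prime.mod_two_eq_one_iff_ne_two Fact.out).mpr hp2
    omega
  exact ⟨hd, pow_sq_sub_one_div_three_eq_one hp6 hd⟩
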